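/- Let G be a finite non-cyclic group whose order is a power of 2. Then the graph co-P_E(G*) is Eulerian (connected with a closed trail traversing every edge exactly once). -/

import Mathlib

/-- A subgroup `M` of `G` is a maximal cyclic subgroup if it is cyclic and is not properly
contained in any cyclic subgroup of `G` other than itself. -/
def IsMaximalCyclic {G : Type*} [Group G] (M : Subgroup G) : Prop :=
  (∃ g : G, M = Subgroup.zpowers g) ∧
    ∀ K : Subgroup G, (∃ g : G, K = Subgroup.zpowers g) → M ≤ K → M = K

/-- The complement of the enhanced power graph of a group `G`: distinct `x, y` are adjacent
iff no cyclic subgroup of `G` contains both. -/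
def coPE (G : Type*) [Group G] : SimpleGraph G where
  Adj x y := x ≠ y ∧ ¬∃ z : G, x ∈ Subgroup.zpowers z ∧ y ∈ Subgroup.zpowers z
  symm := by
    constructor
    rintro x y ⟨h1, h2⟩
    exact ⟨h1.symm, fun ⟨z, hz⟩ => h2 ⟨z, hz.2, hz.1⟩⟩
  loopless := by constructor; rintro x ⟨h, -⟩; exact h rfl

/-- The set of non-isolated vertices of `coPE G`. -/
def nonIsolated (G : Type*) [Group G] : Set G := {x | ∃ y, (coPE G).Adj x y}

/-- The subgraph of `coPE G` induced by its non-isolated vertices. -/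
def coPEstar (G : Type*) [Group G] : SimpleGraph (nonIsolated G) :=
  (coPE G).induce (nonIsolated G)

open scoped Classical in
/-- A graph is Eulerian if it is connected and admits a closed trail traversing
every edge exactly once. -/
def IsEulerianGraph {V : Type*} (Γ : SimpleGraph V) : Prop :=
  Γ.Connected ∧ ∃ (v : V) (p : Γ.Walk v v), p.IsEulerian

/-!
Connectivity: every non-isolated vertex `x` is adjacent to a generator of a maximal cyclic
subgroup (one containing a neighbour of `x`), generators of distinct maximal cyclic subgroups are
adjacent, and a non-cyclic group has at least two maximal cyclic subgroups.

Even degrees: `y ↦ y * x` permutes the neighbours of `x` without fixed points and has order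
`orderOf x`, a power of `2`, so the number of neighbours is even.

Euler's theorem then applies. Its proof takes a longest trail: it is closed, since otherwise it
could be prolonged at its end, where an odd number of its edges meet; and it uses every edge,
since otherwise connectivity gives an unused edge at one of its vertices, where the closed trail
can be rotated to start and then prolonged.
-/

open Finset

namespace SimpleGraph

variable {V : Type*} {Γ : SimpleGraph V}

lemma Walk.IsTrail.concat {u v w : V} {p : Γ.Walk u v} (hp : p.IsTrail) (h : Γ.Adj v w)
    (he : s(v, w) ∉ p.edges) : (p.concat h).IsTrail := by
  rw [Walk.isTrail_def, Walk.edges_concat]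
  exact hp.edges_nodup.concat he

lemma Walk.IsTrail.exists_adj_notMem_edges [Fintype V] [DecidableRel Γ.Adj]
    (heven : ∀ x, Even (Γ.degree x)) {u v : V} {p : Γ.Walk u v} (hp : p.IsTrail) (huv : u ≠ v) :
    ∃ x, Γ.Adj v x ∧ s(v, x) ∉ p.edges := by
  classical
  by_contra! hall
  have hinc : (p.edges.filter (v ∈ ·)).toFinset = Γ.incidenceFinset v := by
    ext e
    simp only [List.mem_toFinset, List.mem_filter, decide_eq_true_eq, mem_incidenceFinset,
      incidenceSet, Set.mem_ofPred_eq]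
    refine ⟨fun ⟨he, hve⟩ => ⟨p.edges_subset_edgeSet he, hve⟩, fun ⟨he, hve⟩ => ⟨?_, hve⟩⟩
    obtain ⟨x, rfl⟩ := Sym2.mem_iff_exists.mp hve
    exact hall x he
  have hodd := (hp.even_countP_edges_iff v).not.mpr (by simp [huv])
  rw [List.countP_eq_length_filter, ← List.toFinset_card_of_nodup (hp.edges_nodup.filter _),
    hinc, card_incidenceFinset_eq_degree] at hodd
  exact hodd (heven v)

lemma Preconnected.exists_adj_notMem_edges (hconn : Γ.Preconnected) {u v : V} (p : Γ.Walk u v)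
    {e : Sym2 V} (he : e ∈ Γ.edgeSet) (hnot : e ∉ p.edges) :
    ∃ w ∈ p.support, ∃ x, Γ.Adj w x ∧ s(w, x) ∉ p.edges := by
  induction e with | h a b =>
  by_cases ha : a ∈ p.support
  · exact ⟨a, ha, b, he, hnot⟩
  obtain ⟨q⟩ := hconn u a
  obtain ⟨d, -, hd₁, hd₂⟩ := q.exists_boundary_dart {x | x ∈ p.support} p.start_mem_support ha
  exact ⟨d.fst, hd₁, d.snd, d.adj, fun h => hd₂ (p.snd_mem_support_of_mem_edges h)⟩

lemma exists_isTrail_forall_length_le [Fintype Γ.edgeSet] [Nonempty V] :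
    ∃ (u v : V) (p : Γ.Walk u v), p.IsTrail ∧
      ∀ (u' v' : V) (q : Γ.Walk u' v'), q.IsTrail → q.length ≤ p.length := by
  set S : Set ℕ := {n | ∃ (u v : V) (p : Γ.Walk u v), p.IsTrail ∧ p.length = n}
  have hbdd : BddAbove S := ⟨#Γ.edgeFinset, fun _ ⟨_, _, _, hp, hn⟩ =>
    hn ▸ hp.length_le_card_edgeFinset⟩
  have hne : S.Nonempty :=
    ⟨0, Classical.arbitrary V, _, Walk.nil, Walk.IsTrail.nil, Walk.length_nil⟩
  obtain ⟨u, v, p, hp, hlen⟩ := Nat.sSup_mem hne hbdd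
  exact ⟨u, v, p, hp, fun _ _ q hq => hlen ▸ le_csSup hbdd ⟨_, _, q, hq, rfl⟩⟩

theorem Connected.isEulerianGraph_of_even_degree [Fintype V] [DecidableRel Γ.Adj]
    (hconn : Γ.Connected) (heven : ∀ v, Even (Γ.degree v)) : IsEulerianGraph Γ := by
  classical
  refine ⟨hconn, ?_⟩
  have := hconn.nonempty
  obtain ⟨u, v, p, hp, hmax⟩ := exists_isTrail_forall_length_le (Γ := Γ)
  obtain rfl : u = v := by
    by_contra huv
    obtain ⟨x, hx, hnot⟩ := hp.exists_adj_notMem_edges heven huv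
    simpa using hmax _ _ _ (hp.concat hx hnot)
  refine ⟨u, p, hp.isEulerian_of_forall_mem fun e he => ?_⟩
  by_contra hne
  obtain ⟨w, hw, x, hx, hnot⟩ := hconn.preconnected.exists_adj_notMem_edges p he hne
  simpa using hmax _ _ _ ((hp.rotate hw).concat hx ((p.rotate_edges w hw).mem_iff.not.mpr hnot))

end SimpleGraph

open Subgroup

lemma dvd_card_of_iterate_prime_pow_eq_id {α : Type*} [Fintype α] {p n : ℕ} [Fact p.Prime]
    {f : α → α} (hf : f^[p ^ n] = id) (hfix : ∀ a, f a ≠ a) : p ∣ Fintype.card α := by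
  classical
  let g : Function.End α := f
  have hmod := Equiv.Perm.card_fixedPoints_modEq (f := g) (p := p) (n := n)
    ((hom_coe_pow (fun g : Function.End α ↦ g) rfl (fun _ _ ↦ rfl) g (p ^ n)).trans hf)
  have hempty : Fintype.card (Function.fixedPoints g) = 0 :=
    Fintype.card_eq_zero_iff.mpr ⟨fun a => hfix a.1 a.2⟩
  rwa [hempty, Nat.modEq_zero_iff_dvd] at hmod

section coPE

variable {G : Type*} [Group G]

lemma coPE_adj_iff {x y : G} :
    (coPE G).Adj x y ↔ ¬∃ z, x ∈ zpowers z ∧ y ∈ zpowers z :=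
  ⟨And.right, fun h => ⟨by rintro rfl; exact h ⟨x, mem_zpowers x, mem_zpowers x⟩, h⟩⟩

lemma mem_nonIsolated_of_adj {x y : G} (h : (coPE G).Adj x y) : y ∈ nonIsolated G :=
  ⟨x, h.symm⟩

lemma ne_one_of_mem_nonIsolated {x : G} (hx : x ∈ nonIsolated G) : x ≠ 1 := by
  rintro rfl
  obtain ⟨y, hy⟩ := hx
  exact coPE_adj_iff.mp hy ⟨y, one_mem _, mem_zpowers y⟩

lemma coPE_adj_mul_right_iff {x y : G} : (coPE G).Adj x (y * x) ↔ (coPE G).Adj x y := by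
  simp only [coPE_adj_iff]
  refine not_congr ⟨fun ⟨z, hx, hyx⟩ => ⟨z, hx, ?_⟩, fun ⟨z, hx, hy⟩ => ⟨z, hx, mul_mem hy hx⟩⟩
  exact (mul_mem_cancel_right hx).mp hyx

lemma IsPGroup.dvd_degree_coPEstar {p : ℕ} [Fact p.Prime] (hG : IsPGroup p G)
    (x : nonIsolated G) [Fintype ((coPEstar G).neighborSet x)] :
    p ∣ (coPEstar G).degree x := by
  let f : (coPEstar G).neighborSet x → (coPEstar G).neighborSet x := fun y =>
    ⟨⟨y * x, mem_nonIsolated_of_adj (coPE_adj_mul_right_iff.mpr y.2)⟩,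
      coPE_adj_mul_right_iff.mpr y.2⟩
  have hf : ∀ (k : ℕ) y, ((f^[k] y : nonIsolated G) : G) = y * (x : G) ^ k := by
    intro k y
    induction k with
    | zero => simp
    | succ k ih => rw [Function.iterate_succ_apply', pow_succ, ← mul_assoc, ← ih]
  obtain ⟨n, hn⟩ := IsPGroup.iff_orderOf.mp hG x
  rw [← SimpleGraph.card_neighborSet_eq_degree]
  refine dvd_card_of_iterate_prime_pow_eq_id (f := f) (n := n) ?_ fun y hy => ?_
  · funext y
    apply Subtype.ext; apply Subtype.ext
    rw [hf, ← hn, pow_orderOf_eq_one, mul_one]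
    rfl
  · have hyx : ((y : nonIsolated G) : G) * x = y :=
      congrArg (fun z : (coPEstar G).neighborSet x => ((z : nonIsolated G) : G)) hy
    exact ne_one_of_mem_nonIsolated x.2 (mul_eq_left.mp hyx)

end coPE

section MaximalCyclic

variable {G : Type*} [Group G]

lemma exists_isMaximalCyclic_zpowers_mem [Finite G] (x : G) :
    ∃ g : G, IsMaximalCyclic (zpowers g) ∧ x ∈ zpowers g := by
  have : Finite (Subgroup G) := Finite.of_injective _ SetLike.coe_injective
  obtain ⟨M, ⟨⟨g, rfl⟩, hxM⟩, hmax⟩ := Set.Finite.exists_maximalFor id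
    {K : Subgroup G | (∃ g, K = zpowers g) ∧ x ∈ K} (Set.toFinite _)
    ⟨zpowers x, ⟨x, rfl⟩, mem_zpowers x⟩
  exact ⟨g, ⟨⟨g, rfl⟩, fun K hK hle => le_antisymm hle (hmax ⟨hK, hle hxM⟩ hle)⟩, hxM⟩

lemma exists_isMaximalCyclic_zpowers_ne [Finite G] (hG : ¬IsCyclic G) (g : G) :
    ∃ h : G, IsMaximalCyclic (zpowers h) ∧ zpowers h ≠ zpowers g := by
  obtain ⟨y, hy⟩ : ∃ y, y ∉ zpowers g := by
    by_contra! hall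
    exact hG (isCyclic_iff_exists_zpowers_eq_top.mpr ⟨g, (eq_top_iff' _).mpr hall⟩)
  obtain ⟨h, hh, hyh⟩ := exists_isMaximalCyclic_zpowers_mem y
  exact ⟨h, hh, fun heq => hy (heq ▸ hyh)⟩

lemma IsMaximalCyclic.coPE_adj {g y : G} (hg : IsMaximalCyclic (zpowers g))
    (hy : y ∉ zpowers g) : (coPE G).Adj g y :=
  coPE_adj_iff.mpr fun ⟨z, hgz, hyz⟩ => hy (hg.2 _ ⟨z, rfl⟩ (zpowers_le.mpr hgz) ▸ hyz)

lemma IsMaximalCyclic.coPE_adj_of_ne {g h : G} (hg : IsMaximalCyclic (zpowers g))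
    (hh : IsMaximalCyclic (zpowers h)) (hne : zpowers g ≠ zpowers h) : (coPE G).Adj g h :=
  hg.coPE_adj fun hmem => hne (hh.2 _ ⟨g, rfl⟩ (zpowers_le.mpr hmem)).symm

lemma exists_isMaximalCyclic_coPE_adj [Finite G] {x : G} (hx : x ∈ nonIsolated G) :
    ∃ g : G, IsMaximalCyclic (zpowers g) ∧ (coPE G).Adj x g := by
  obtain ⟨y, hxy⟩ := hx
  obtain ⟨g, hg, hyg⟩ := exists_isMaximalCyclic_zpowers_mem y
  exact ⟨g, hg, (hg.coPE_adj fun hxg => coPE_adj_iff.mp hxy ⟨g, hxg, hyg⟩).symm⟩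

lemma coPEstar_reachable_of_isMaximalCyclic [Finite G] (hG : ¬IsCyclic G) {g h : nonIsolated G}
    (hg : IsMaximalCyclic (zpowers (g : G))) (hh : IsMaximalCyclic (zpowers (h : G))) :
    (coPEstar G).Reachable g h := by
  by_cases hgh : zpowers (g : G) = zpowers (h : G)
  · obtain ⟨k, hk, hkg⟩ := exists_isMaximalCyclic_zpowers_ne hG g
    have hgk := hg.coPE_adj_of_ne hk hkg.symm
    let k' : nonIsolated G := ⟨k, mem_nonIsolated_of_adj hgk⟩
    have hkh : (coPEstar G).Adj k' h := hk.coPE_adj_of_ne hh (hgh ▸ hkg)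
    exact (show (coPEstar G).Adj g k' from hgk).reachable.trans hkh.reachable
  · exact (show (coPEstar G).Adj g h from hg.coPE_adj_of_ne hh hgh).reachable

theorem coPEstar_connected [Finite G] (hG : ¬IsCyclic G) : (coPEstar G).Connected := by
  have toMaximalCyclic : ∀ x : nonIsolated G, ∃ g : nonIsolated G,
      IsMaximalCyclic (zpowers (g : G)) ∧ (coPEstar G).Reachable x g := fun x => by
    obtain ⟨g, hg, hxg⟩ := exists_isMaximalCyclic_coPE_adj x.2
    let g' : nonIsolated G := ⟨g, mem_nonIsolated_of_adj hxg⟩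
    exact ⟨g', hg, (show (coPEstar G).Adj x g' from hxg).reachable⟩
  obtain ⟨g, hg, -⟩ := exists_isMaximalCyclic_zpowers_mem (1 : G)
  obtain ⟨h, hh, hhg⟩ := exists_isMaximalCyclic_zpowers_ne hG g
  refine (SimpleGraph.connected_iff _).mpr ⟨fun x y => ?_,
    ⟨⟨g, ⟨h, hg.coPE_adj_of_ne hh hhg.symm⟩⟩⟩⟩
  obtain ⟨g, hg, hxg⟩ := toMaximalCyclic x
  obtain ⟨h, hh, hyh⟩ := toMaximalCyclic y
  exact hxg.trans ((coPEstar_reachable_of_isMaximalCyclic hG hg hh).trans hyh.symm)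

end MaximalCyclic

theorem coPEstar_eulerian_of_two_group {G : Type*} [Group G] [Finite G]
    (hG : ¬ IsCyclic G) (h2 : ∃ k : ℕ, Nat.card G = 2 ^ k) :
    IsEulerianGraph (coPEstar G) := by
  classical
  have : Fintype (nonIsolated G) := Fintype.ofFinite _
  obtain ⟨k, hk⟩ := h2
  have h2G : IsPGroup 2 G := IsPGroup.of_card hk
  exact (coPEstar_connected hG).isEulerianGraph_of_even_degree fun x =>
    even_iff_two_dvd.mpr (h2G.dvd_degree_coPEstar x)
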